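/- arXiv:2110.09786 — 2 statements merged into one kernel-verified Lean document; each statement's English description precedes it below -/
import Mathlib

section
/- Let ω ∈ (0, (1 − Ω)/𝔫) where Ω ∈ (0,1) and 𝔫 > 0, and define W(e_a, μ) := ω|e_a| + μ for μ ≥ 0. If the update jump maps (e_a, μ) to (e_a⁺, Ω·μ) with |e_a⁺| ≤ 𝔫·μ (quantization-error-sized residual), then W(e_a⁺, Ωμ) ≤ (ω𝔫 + Ω)·W(e_a, μ), and the contraction factor λ := ω𝔫 + Ω satisfies λ < 1. -/
/-- Jump contraction (Assumption 5, inequality (19)) for W(e_a, μ) = ω|e_a| + μ: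
after an update with |e_a⁺| ≤ 𝔫·μ and zoom μ⁺ = Ω·μ,
W contracts by λ = ω𝔫 + Ω < 1 provided ω ∈ (0, (1−Ω)/𝔫). -/
theorem jump_contraction {na : ℕ}
    (ω Ω 𝔫 μ : ℝ) (hΩ : Ω ∈ Set.Ioo (0 : ℝ) 1) (h𝔫 : 0 < 𝔫)
    (hω : ω ∈ Set.Ioo (0 : ℝ) ((1 - Ω) / 𝔫)) (hμ : 0 ≤ μ)
    (ea ea' : EuclideanSpace ℝ (Fin na)) (hea' : ‖ea'‖ ≤ 𝔫 * μ) :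
    ω * ‖ea'‖ + Ω * μ ≤ (ω * 𝔫 + Ω) * (ω * ‖ea‖ + μ) ∧ ω * 𝔫 + Ω < 1 := by
  obtain ⟨hω0, hωlt⟩ := hω
  obtain ⟨hΩ0, hΩ1⟩ := hΩ
  constructor
  · have h1 : ω * ‖ea'‖ ≤ ω * (𝔫 * μ) := by
      exact mul_le_mul_of_nonneg_left hea' hω0.le
    nlinarith [mul_nonneg (mul_nonneg hω0.le h𝔫.le) (mul_nonneg hω0.le (norm_nonneg ea)), mul_nonneg hΩ0.le (mul_nonneg hω0.le (norm_nonneg ea))]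
  · have := (lt_div_iff₀ h𝔫).mp hωlt
    linarith
end

section
/- Suppose U : dom → ℝ≥0 is a function along a hybrid solution such that on flows d/dt U(t,j) ≤ −μ·U(t,j) + c (for constants μ > 0, c ≥ 0) and at jumps U(t, j+1) ≤ U(t, j). Then for all (t,j) in the hybrid time domain, U(t,j) ≤ e^{−μ t}·U(0,0) + c/μ. -/
open Set

/-!
Multiplying by the integrating factor `exp (μ s)` turns the differential inequality
`U' ≤ -μ U + c` into the statement that `exp (μ s) * (U - c / μ)` is antitone along each flow;
it also does not increase at jumps, so along the whole hybrid time domain it is bounded by its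
value `U (0, 0) - c / μ` at the initial time.
-/

theorem antitoneOn_exp_mul_sub_div_of_hasDerivWithinAt {μ c : ℝ} (hμ : μ ≠ 0) {D : Set ℝ}
    (hD : Convex ℝ D) {g g' : ℝ → ℝ} (hg : ∀ x ∈ D, HasDerivWithinAt g (g' x) D x)
    (hg' : ∀ x ∈ D, g' x ≤ -μ * g x + c) :
    AntitoneOn (fun x => Real.exp (μ * x) * (g x - c / μ)) D := by
  have hderiv : ∀ x ∈ D, HasDerivWithinAt (fun x => Real.exp (μ * x) * (g x - c / μ))
      (Real.exp (μ * x) * (μ * (g x - c / μ) + g' x)) D x := by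
    intro x hx
    have hexp : HasDerivAt (fun x => Real.exp (μ * x)) (Real.exp (μ * x) * μ) x := by
      simpa using ((hasDerivAt_id x).const_mul μ).exp
    exact (hexp.hasDerivWithinAt.mul ((hg x hx).sub_const _)).congr_deriv (by ring)
  refine antitoneOn_of_hasDerivWithinAt_nonpos hD
    (fun x hx => (hderiv x hx).continuousWithinAt)
    (fun x hx => (hderiv x (interior_subset hx)).mono interior_subset) fun x hx => ?_
  have hcancel : μ * (g x - c / μ) + g' x = g' x - (-μ * g x + c) := by
    field_simp
    ring
  rw [hcancel]
  exact mul_nonpos_of_nonneg_of_nonpos (Real.exp_pos _).le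
    (sub_nonpos.2 (hg' x (interior_subset hx)))

theorem le_initial_of_antitoneOn_flows {t : ℕ → ℝ} (ht : Monotone t) {W : ℕ → ℝ → ℝ}
    (hflow : ∀ j, AntitoneOn (W j) (Icc (t j) (t (j + 1))))
    (hjump : ∀ j, W (j + 1) (t (j + 1)) ≤ W j (t (j + 1))) :
    ∀ j, ∀ s ∈ Icc (t j) (t (j + 1)), W j s ≤ W 0 (t 0) := by
  have hstart : ∀ j, W j (t j) ≤ W 0 (t 0) := by
    intro j
    induction j with
    | zero => exact le_rfl
    | succ j ih =>
      have hend : t (j + 1) ∈ Icc (t j) (t (j + 1)) := ⟨ht j.le_succ, le_rfl⟩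
      calc W (j + 1) (t (j + 1)) ≤ W j (t (j + 1)) := hjump j
        _ ≤ W j (t j) := hflow j (left_mem_Icc.2 hend.1) hend hend.1
        _ ≤ W 0 (t 0) := ih
  intro j s hs
  exact (hflow j (left_mem_Icc.2 (hs.1.trans hs.2)) hs hs.1).trans (hstart j)

theorem hybrid_lyapunov_decrease_general
    (μ c : ℝ) (hμ : 0 < μ) (hc : 0 ≤ c)
    (t : ℕ → ℝ) (ht0 : t 0 = 0) (htmono : Monotone t)
    (U : ℝ × ℕ → ℝ)
    (D : ℕ → ℝ → ℝ)
    -- flow condition: dU/dt = D j s ≤ −μ·U + c on each flow interval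
    (hflow : ∀ j, ∀ s ∈ Icc (t j) (t (j + 1)),
      HasDerivWithinAt (fun u => U (u, j)) (D j s) (Icc (t j) (t (j + 1))) s)
    (hD : ∀ j, ∀ s ∈ Icc (t j) (t (j + 1)), D j s ≤ -μ * U (s, j) + c)
    -- jump condition: U does not increase at jumps
    (hjump : ∀ j, U (t (j + 1), j + 1) ≤ U (t (j + 1), j)) :
    ∀ j, ∀ s ∈ Icc (t j) (t (j + 1)),
      U (s, j) ≤ Real.exp (-μ * s) * U (0, 0) + c / μ := by
  intro j s hs
  have hW := le_initial_of_antitoneOn_flows htmono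
    (W := fun j s => Real.exp (μ * s) * (U (s, j) - c / μ))
    (fun j => antitoneOn_exp_mul_sub_div_of_hasDerivWithinAt hμ.ne' (convex_Icc _ _)
      (hflow j) (hD j))
    (fun j => mul_le_mul_of_nonneg_left (sub_le_sub_right (hjump j) _) (Real.exp_pos _).le)
    j s hs
  simp only [ht0, mul_zero, Real.exp_zero, one_mul] at hW
  have hexp : Real.exp (-μ * s) * Real.exp (μ * s) = 1 := by
    rw [← Real.exp_add]
    simp
  calc U (s, j) = Real.exp (-μ * s) * (Real.exp (μ * s) * (U (s, j) - c / μ)) + c / μ := by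
        rw [← mul_assoc, hexp]
        ring
    _ ≤ Real.exp (-μ * s) * (U (0, 0) - c / μ) + c / μ := by gcongr
    _ ≤ Real.exp (-μ * s) * U (0, 0) + c / μ := by
        gcongr
        exact sub_le_self _ (div_nonneg hc hμ.le)

/-- Hybrid Lyapunov comparison: if U decreases as dU/dt ≤ −μU + c on flows and does not
increase at jumps, then U(t,j) ≤ e^{−μt}·U(0,0) + c/μ on the whole hybrid time domain.
The hybrid time domain is described by the nondecreasing sequence of jump times (t j),
with t 0 = 0, the j-th flow interval being [t j, t (j+1)]. -/
theorem hybrid_lyapunov_decrease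
    (μ c : ℝ) (hμ : 0 < μ) (hc : 0 ≤ c)
    (t : ℕ → ℝ) (ht0 : t 0 = 0) (htmono : Monotone t)
    (U : ℝ × ℕ → ℝ) (hUnn : ∀ j, ∀ s ∈ Icc (t j) (t (j + 1)), 0 ≤ U (s, j))
    (D : ℕ → ℝ → ℝ)
    -- flow condition: dU/dt = D j s ≤ −μ·U + c on each flow interval
    (hflow : ∀ j, ∀ s ∈ Icc (t j) (t (j + 1)),
      HasDerivWithinAt (fun u => U (u, j)) (D j s) (Icc (t j) (t (j + 1))) s)
    (hD : ∀ j, ∀ s ∈ Icc (t j) (t (j + 1)), D j s ≤ -μ * U (s, j) + c)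
    -- jump condition: U does not increase at jumps
    (hjump : ∀ j, U (t (j + 1), j + 1) ≤ U (t (j + 1), j)) :
    ∀ j, ∀ s ∈ Icc (t j) (t (j + 1)),
      U (s, j) ≤ Real.exp (-μ * s) * U (0, 0) + c / μ :=
  hybrid_lyapunov_decrease_general μ c hμ hc t ht0 htmono U D hflow hD hjump
end
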